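/- For all positive integers s and t, the volume of the graph polytope of the complete bipartite graph K_{s,t} equals 1/C(s+t, s), i.e. vol(K_{s,t}) = 1/C(s+t,s). -/

import Mathlib

/-!
Reflecting the coordinates of the second side, `x ↦ 1 - x`, preserves volume and maps the graph
polytope of `K_{s,t}` onto the cell of the unit cube in which every coordinate of the first side is
at most every coordinate of the second. For `n = s + t`, the `C(n, s)` cells
`{x ∈ [0,1]^n : x_i ≤ x_j for i ∈ T, j ∉ T}` with `#T = s` cover the cube, meet only inside the
hyperplanes `x_i = x_j`, and are permuted transitively by permutations of the coordinates, so each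
of them has volume `1 / C(n, s)`.
-/

open MeasureTheory Finset

/-- The graph polytope volume: `vol(G)` is the Lebesgue volume of
`{x ∈ [0,1]^V : x_i + x_j ≤ 1 for every edge ij of G}`. -/
noncomputable def gvol {V : Type*} [Fintype V] (G : SimpleGraph V) : ℝ :=
  (volume {x : V → ℝ | (∀ i, x i ∈ Set.Icc (0:ℝ) 1) ∧
      ∀ ⦃i j⦄, G.Adj i j → x i + x j ≤ 1}).toReal

def graphPolytope {V : Type*} (G : SimpleGraph V) : Set (V → ℝ) :=
  {x | (∀ i, x i ∈ Set.Icc (0:ℝ) 1) ∧ ∀ ⦃i j⦄, G.Adj i j → x i + x j ≤ 1}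

theorem gvol_eq_toReal_volume_graphPolytope {V : Type*} [Fintype V] (G : SimpleGraph V) :
    gvol G = (volume (graphPolytope G)).toReal :=
  rfl

section LowerCell

variable {ι : Type*}

theorem Finset.exists_card_eq_forall_le {α : Type*} [Fintype ι] [LinearOrder α] (f : ι → α)
    {k : ℕ} (hk : k ≤ Fintype.card ι) :
    ∃ T : Finset ι, #T = k ∧ ∀ i ∈ T, ∀ j ∉ T, f i ≤ f j := by
  classical
  induction k with
  | zero => exact ⟨∅, rfl, by simp⟩
  | succ k ih =>
    obtain ⟨T, hcard, hle⟩ := ih (by omega)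
    obtain ⟨m, hmT, hmin⟩ := Tᶜ.exists_min_image f (card_pos.mp (by rw [card_compl]; omega))
    rw [mem_compl] at hmT
    refine ⟨insert m T, by rw [card_insert_of_notMem hmT, hcard], fun i hi j hj ↦ ?_⟩
    rw [mem_insert, not_or] at hj
    rcases mem_insert.mp hi with rfl | hi
    · exact hmin j (mem_compl.mpr hj.2)
    · exact hle i hi j hj.2

def lowerCell (T : Finset ι) : Set (ι → ℝ) :=
  Set.univ.pi (fun _ ↦ Set.Icc 0 1) ∩ {w | ∀ i ∈ T, ∀ j ∉ T, w i ≤ w j}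

theorem measurableSet_lowerCell [Fintype ι] (T : Finset ι) : MeasurableSet (lowerCell T) := by
  unfold lowerCell
  measurability

theorem iUnion_lowerCell [Fintype ι] {k : ℕ} (hk : k ≤ Fintype.card ι) :
    ⋃ T ∈ powersetCard k univ, lowerCell T = Set.univ.pi (fun _ : ι ↦ Set.Icc (0 : ℝ) 1) := by
  refine subset_antisymm (Set.iUnion₂_subset fun T _ ↦ Set.inter_subset_left) fun w hw ↦ ?_
  obtain ⟨T, hcard, hle⟩ := exists_card_eq_forall_le w hk
  exact Set.mem_biUnion (mem_powersetCard_univ.mpr hcard) ⟨hw, hle⟩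

theorem volume_setOf_apply_eq_apply [Fintype ι] {i j : ι} (hij : i ≠ j) :
    volume {w : ι → ℝ | w i = w j} = 0 := by
  classical
  have hker : {w : ι → ℝ | w i = w j} =
      LinearMap.ker (LinearMap.proj (R := ℝ) (φ := fun _ : ι ↦ ℝ) i - LinearMap.proj j) := by
    ext w
    simp [sub_eq_zero]
  rw [hker]
  refine Measure.addHaar_submodule _ _ fun htop ↦ ?_
  have := LinearMap.congr_fun (LinearMap.ker_eq_top.mp htop) (Pi.single i 1)
  simp [hij] at this

theorem aedisjoint_lowerCell [Fintype ι] {S T : Finset ι} (hcard : #S = #T) (hST : S ≠ T) :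
    AEDisjoint volume (lowerCell S) (lowerCell T) := by
  obtain ⟨i, hiS, hiT⟩ : ∃ i ∈ S, i ∉ T := by
    by_contra! h
    exact hST (eq_of_subset_of_card_le h hcard.ge)
  obtain ⟨j, hjT, hjS⟩ : ∃ j ∈ T, j ∉ S := by
    by_contra! h
    exact hST (eq_of_subset_of_card_le h hcard.le).symm
  refine measure_mono_null (fun w ⟨hwS, hwT⟩ ↦ ?_)
    (volume_setOf_apply_eq_apply (ne_of_mem_of_not_mem hiS hjS))
  exact le_antisymm (hwS.2 i hiS j hjS) (hwT.2 j hjT i hiT)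

theorem preimage_comp_lowerCell (σ : Equiv.Perm ι) (T : Finset ι) :
    (· ∘ σ) ⁻¹' lowerCell T = lowerCell (T.map σ.toEmbedding) := by
  ext w
  simp only [lowerCell, Set.mem_preimage, Set.mem_inter_iff, Set.mem_univ_pi, Set.mem_ofPred_eq,
    Function.comp_apply]
  refine and_congr (σ.forall_congr_right (q := fun i ↦ w i ∈ Set.Icc 0 1))
    (σ.forall_congr fun i ↦ ?_)
  simp only [mem_map_equiv, σ.symm_apply_apply]
  exact imp_congr_right fun _ ↦ σ.forall_congr fun j ↦ by simp

theorem volume_lowerCell_eq_of_card_eq [Fintype ι] {S T : Finset ι} (h : #S = #T) :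
    volume (lowerCell S) = volume (lowerCell T) := by
  classical
  obtain ⟨σ, rfl⟩ : ∃ σ : Equiv.Perm ι, S.map σ.toEmbedding = T := by
    refine ⟨(S.equivOfCardEq h).extendSubtype,
      eq_of_subset_of_card_le (fun x hx ↦ ?_) (by simp [h])⟩
    obtain ⟨y, hy, rfl⟩ := mem_map.mp hx
    exact Equiv.extendSubtype_mem _ y hy
  rw [← preimage_comp_lowerCell]
  exact (((volume_measurePreserving_piCongrLeft (fun _ ↦ ℝ) σ).symm _).measure_preimage
    (measurableSet_lowerCell S).nullMeasurableSet).symm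

theorem volume_lowerCell [Fintype ι] (T : Finset ι) :
    volume (lowerCell T) = ((Fintype.card ι).choose #T : ENNReal)⁻¹ := by
  have hdisj : (powersetCard #T (univ : Finset ι) : Set (Finset ι)).Pairwise
      (Function.onFun (AEDisjoint volume) lowerCell) := fun S hS S' hS' hne ↦
    aedisjoint_lowerCell
      ((mem_powersetCard_univ.mp hS).trans (mem_powersetCard_univ.mp hS').symm) hne
  have hsum : ∑ S ∈ powersetCard #T (univ : Finset ι), volume (lowerCell S) = 1 := by
    rw [← measure_biUnion_finset₀ hdisj fun S _ ↦ (measurableSet_lowerCell S).nullMeasurableSet,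
      iUnion_lowerCell (card_le_univ T), volume_pi_pi]
    simp
  rw [sum_congr rfl fun S hS ↦ volume_lowerCell_eq_of_card_eq (mem_powersetCard_univ.mp hS),
    sum_const, card_powersetCard, card_univ, nsmul_eq_mul] at hsum
  exact ENNReal.eq_inv_of_mul_eq_one_left (by rwa [mul_comm])

end LowerCell

section CompleteBipartite

variable {α β : Type*}

def reflectRight (w : α ⊕ β → ℝ) : α ⊕ β → ℝ
  | .inl a => w (.inl a)
  | .inr b => 1 - w (.inr b)

theorem measurePreserving_reflectRight [Fintype α] [Fintype β] :
    MeasurePreserving (reflectRight (α := α) (β := β)) volume volume := by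
  let f : α ⊕ β → ℝ → ℝ := Sum.elim (fun _ ↦ id) (fun _ x ↦ 1 - x)
  have hf : ∀ k, MeasurePreserving (f k) volume volume := by
    rintro (a | b)
    · exact .id volume
    · exact volume.measurePreserving_sub_left 1
  have hpi : (reflectRight : (α ⊕ β → ℝ) → α ⊕ β → ℝ) = fun w k ↦ f k (w k) := by
    funext w k
    cases k <;> rfl
  rw [hpi, volume_pi]
  exact measurePreserving_pi _ _ hf

theorem graphPolytope_completeBipartiteGraph [Fintype α] :
    graphPolytope (completeBipartiteGraph α β) = reflectRight ⁻¹' lowerCell (univ.map .inl) := by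
  ext w
  simp only [graphPolytope, lowerCell, Set.mem_preimage, Set.mem_inter_iff, Set.mem_univ_pi,
    Set.mem_ofPred_eq, Set.mem_Icc, Sum.forall, completeBipartiteGraph_adj, Sum.isRight_inl,
    Bool.false_eq_true, and_false, Sum.isLeft_inl, and_true, false_or, Sum.isRight_inr,
    Sum.isLeft_inr, or_false, IsEmpty.forall_iff, implies_true, forall_const, true_and,
    reflectRight, le_sub_iff_add_le, zero_add, tsub_le_iff_right, le_add_iff_nonneg_right,
    mem_map, mem_univ, Function.Embedding.inl_apply, not_exists, ne_eq, Sum.inl.injEq, forall_eq,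
    reduceCtorEq, not_false_eq_true, forall_exists_index, forall_apply_eq_imp_iff]
  constructor
  · rintro ⟨⟨hl, hr⟩, hlr, -⟩
    exact ⟨⟨hl, fun b ↦ (hr b).symm⟩, hlr⟩
  · rintro ⟨⟨hl, hr⟩, hlr⟩
    exact ⟨⟨hl, fun b ↦ (hr b).symm⟩, hlr, fun b a ↦ add_comm (w (.inr b)) _ ▸ hlr a b⟩

theorem gvol_completeBipartiteGraph [Fintype α] [Fintype β] :
    gvol (completeBipartiteGraph α β) =
      1 / ((Fintype.card α + Fintype.card β).choose (Fintype.card α) : ℝ) := by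
  rw [gvol_eq_toReal_volume_graphPolytope, graphPolytope_completeBipartiteGraph,
    measurePreserving_reflectRight.measure_preimage (measurableSet_lowerCell _).nullMeasurableSet,
    volume_lowerCell]
  simp

end CompleteBipartite

theorem vol_completeBipartite_general (s t : ℕ) :
    gvol (completeBipartiteGraph (Fin s) (Fin t)) = 1 / ((s + t).choose s : ℝ) := by
  simpa using gvol_completeBipartiteGraph (α := Fin s) (β := Fin t)

/-- The volume of the graph polytope of the complete bipartite graph `K_{s,t}`
is `1 / C(s+t, s)`. -/
theorem vol_completeBipartite (s t : ℕ) (hs : 1 ≤ s) (ht : 1 ≤ t) :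
    gvol (completeBipartiteGraph (Fin s) (Fin t)) = 1 / ((s + t).choose s : ℝ) :=
  vol_completeBipartite_general s t
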